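/- (Semigroup property of fractional $q$-Weyl integrals.) Let $0<q<1$ and $\nu,\mu \in \mathbb{C}$ with $\Re\nu > 0$, $\Re\mu > 0$. Define $(W_\nu f)(x) = x^\nu \sum_{l=0}^\infty f(xq^{-l}) q^{-l\nu} \frac{(q^\nu;q)_l}{(q;q)_l}$ for functions $f$ on $(0,\infty)$ for which the series converges absolutely. Then for any $\rho > \Re(\mu+\nu)$ and any $f$ satisfying $|f(xq^{-l})| = O(q^{l\rho})$ as $l \to \infty$ for each $x \in (q,1]$: $W_\nu(W_\mu f) = W_{\nu+\mu} f$ pointwise on $(0,\infty)$. -/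

import Mathlib

/-- Finite q-shifted factorial `(c;q)_j`. -/
noncomputable def qP (q : ℝ) (c : ℂ) (j : ℕ) : ℂ :=
  ∏ i ∈ Finset.range j, (1 - c * (q : ℂ) ^ i)

/-- Fractional q-Weyl integral operator
`(W_ν f)(x) = x^ν ∑_{l≥0} f(x q^{-l}) q^{-lν} (q^ν;q)_l / (q;q)_l`. -/
noncomputable def Wop (q : ℝ) (ν : ℂ) (f : ℝ → ℂ) (x : ℝ) : ℂ :=
  (x : ℂ) ^ ν * ∑' l : ℕ,
    f (x / q ^ l) * (q : ℂ) ^ (-(l : ℂ) * ν) * qP q ((q : ℂ) ^ ν) l / qP q (q : ℂ) l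

/-!
Expanding both operators, `W_ν (W_μ f)(x)` is `x^{ν+μ}` times a double series over `(l, k)` whose
terms are `f(x q^{-(l+k)})` times `q^{-(l+k)μ - lν} (q^ν;q)_l (q^μ;q)_k / ((q;q)_l (q;q)_k)`.
The `q`-shifted factorial ratios are bounded, so the decay of `f` along the grid `x q^{-n}`
(which reaches every `x > 0` from a point of `(q, 1]`) makes the double series absolutely
convergent. Summing it along the antidiagonals `l + k = p` instead, the `q`-Chu–Vandermonde
identity collapses each antidiagonal to the `p`-th term of `W_{ν+μ} f (x)`.
-/

open Finset

theorem Summable.tsum_eq_tsum_sum_antidiagonal {A α : Type*} [AddCommMonoid A]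
    [HasAntidiagonal A] [AddCommMonoid α] [TopologicalSpace α] [ContinuousAdd α] [T3Space α]
    {G : A × A → α} (hG : Summable G) : ∑' x, G x = ∑' n, ∑ x ∈ antidiagonal n, G x := by
  rw [← HasAntidiagonal.sigmaAntidiagonalEquivProd.tsum_eq G]
  refine ((HasAntidiagonal.sigmaAntidiagonalEquivProd.summable_iff.2 hG).tsum_sigma'
    fun n => (hasSum_fintype _).summable).trans ?_
  exact tsum_congr fun n => (tsum_fintype _).trans (sum_finset_coe (fun x => G x) _)

section

variable {q : ℝ}

noncomputable def qPRatio (q : ℝ) (c : ℂ) (k : ℕ) : ℂ :=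
  qP q c k / qP q q k

lemma qP_succ (c : ℂ) (j : ℕ) : qP q c (j + 1) = qP q c j * (1 - c * (q : ℂ) ^ j) :=
  prod_range_succ _ _

lemma one_sub_pow_succ_ne_zero (hq : |q| < 1) (i : ℕ) : (1 : ℂ) - (q : ℂ) ^ (i + 1) ≠ 0 := by
  refine sub_ne_zero.2 fun h => (pow_lt_one₀ (abs_nonneg q) hq i.succ_ne_zero).ne' ?_
  simpa using congrArg norm h

lemma qP_self_ne_zero (hq : |q| < 1) (j : ℕ) : qP q q j ≠ 0 :=
  prod_ne_zero_iff.2 fun i _ => by rw [← pow_succ']; exact one_sub_pow_succ_ne_zero hq i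

@[simp] lemma qPRatio_zero (c : ℂ) : qPRatio q c 0 = 1 := by simp [qPRatio, qP]

lemma qPRatio_succ_mul (hq : |q| < 1) (c : ℂ) (k : ℕ) :
    qPRatio q c (k + 1) * (1 - (q : ℂ) ^ (k + 1)) = qPRatio q c k * (1 - c * (q : ℂ) ^ k) := by
  have h₁ := qP_self_ne_zero hq k
  have h₂ := one_sub_pow_succ_ne_zero hq k
  rw [pow_succ'] at h₂ ⊢
  simp only [qPRatio, qP_succ]
  rw [div_mul_eq_mul_div, div_mul_eq_mul_div, div_eq_div_iff (mul_ne_zero h₁ h₂) h₁]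
  ring

theorem qPRatio_vandermonde (hq : |q| < 1) (a b : ℂ) (p : ℕ) :
    ∑ lk ∈ antidiagonal p, qPRatio q a lk.1 * qPRatio q b lk.2 * a ^ lk.2 =
      qPRatio q (a * b) p := by
  induction p with
  | zero => simp
  | succ p ih =>
    -- both sides satisfy `(1 - q^{p+1}) S_{p+1} = (1 - a b q^p) S_p`
    set t : ℕ × ℕ → ℂ := fun lk => qPRatio q a lk.1 * qPRatio q b lk.2 * a ^ lk.2
    have shift_snd : ∑ lk ∈ antidiagonal (p + 1), (1 - (q : ℂ) ^ lk.2) * q ^ lk.1 * t lk =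
        ∑ lk ∈ antidiagonal p, a * (1 - b * q ^ lk.2) * q ^ lk.1 * t lk := by
      rw [Nat.sum_antidiagonal_succ']
      simp only [t, pow_zero, sub_self, zero_mul, zero_add]
      refine sum_congr rfl fun lk _ => ?_
      linear_combination
        (a * q ^ lk.1 * qPRatio q a lk.1 * a ^ lk.2) * qPRatio_succ_mul hq b lk.2
    have shift_fst : ∑ lk ∈ antidiagonal (p + 1), (1 - (q : ℂ) ^ lk.1) * t lk =
        ∑ lk ∈ antidiagonal p, (1 - a * q ^ lk.1) * t lk := by
      rw [Nat.sum_antidiagonal_succ]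
      simp only [t, pow_zero, sub_self, zero_mul, zero_add]
      refine sum_congr rfl fun lk _ => ?_
      linear_combination (qPRatio q b lk.2 * a ^ lk.2) * qPRatio_succ_mul hq a lk.1
    have step : (1 - (q : ℂ) ^ (p + 1)) * ∑ lk ∈ antidiagonal (p + 1), t lk =
        (1 - a * b * q ^ p) * ∑ lk ∈ antidiagonal p, t lk := by
      have split : ∀ lk ∈ antidiagonal (p + 1), (1 - (q : ℂ) ^ (p + 1)) * t lk =
          (1 - (q : ℂ) ^ lk.2) * q ^ lk.1 * t lk + (1 - (q : ℂ) ^ lk.1) * t lk := by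
        intro lk hlk
        rw [← mem_antidiagonal.1 hlk, pow_add]
        ring
      rw [mul_sum, sum_congr rfl split, sum_add_distrib, shift_snd, shift_fst, ← sum_add_distrib,
        mul_sum]
      refine sum_congr rfl fun lk hlk => ?_
      rw [← mem_antidiagonal.1 hlk, pow_add]
      ring
    apply mul_left_cancel₀ (one_sub_pow_succ_ne_zero hq p)
    rw [step, ih, mul_comm _ (qPRatio q (a * b) p), ← qPRatio_succ_mul hq, mul_comm]

lemma geom_sum_le_one_div_one_sub (hq0 : 0 ≤ q) (hq1 : q < 1) (j : ℕ) :
    ∑ i ∈ range j, q ^ i ≤ 1 / (1 - q) := by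
  have := geom_sum_Ico_le_of_lt_one (m := 0) (n := j) hq0 hq1
  rwa [pow_zero, ← range_eq_Ico] at this

lemma norm_qP_le (hq0 : 0 ≤ q) (hq1 : q < 1) (c : ℂ) (j : ℕ) :
    ‖qP q c j‖ ≤ Real.exp (‖c‖ / (1 - q)) :=
  calc ‖qP q c j‖ = ∏ i ∈ range j, ‖1 - c * (q : ℂ) ^ i‖ := norm_prod _ _
    _ ≤ ∏ i ∈ range j, (1 + ‖c‖ * q ^ i) := by
      refine prod_le_prod (fun _ _ => norm_nonneg _) fun i _ => (norm_sub_le _ _).trans ?_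
      simp [abs_of_nonneg hq0]
    _ ≤ Real.exp (∑ i ∈ range j, ‖c‖ * q ^ i) :=
      Real.prod_one_add_le_exp_sum _ fun i => by positivity
    _ ≤ Real.exp (‖c‖ / (1 - q)) := by
      rw [← mul_sum, div_eq_mul_one_div]
      gcongr
      exact geom_sum_le_one_div_one_sub hq0 hq1 j

lemma inv_one_sub_le (hq1 : q < 1) {t : ℝ} (ht0 : 0 ≤ t) (htq : t ≤ q) :
    (1 - t)⁻¹ ≤ 1 + t / (1 - q) := by
  have h1q : 0 < 1 - q := by linarith
  rw [inv_le_iff_one_le_mul₀ (by linarith), one_add_div h1q.ne', div_mul_eq_mul_div,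
    le_div_iff₀ h1q]
  nlinarith

lemma norm_qP_self_inv_le (hq0 : 0 ≤ q) (hq1 : q < 1) (j : ℕ) :
    ‖qP q q j‖⁻¹ ≤ Real.exp (q / (1 - q) ^ 2) := by
  have hfactor : ∀ i, ‖1 - (q : ℂ) * (q : ℂ) ^ i‖ = 1 - q ^ (i + 1) := fun i => by
    rw [← pow_succ', ← Complex.ofReal_pow, ← Complex.ofReal_one, ← Complex.ofReal_sub,
      Complex.norm_of_nonneg (sub_nonneg.2 (pow_le_one₀ hq0 hq1.le))]
  calc ‖qP q q j‖⁻¹ = ∏ i ∈ range j, (1 - q ^ (i + 1))⁻¹ := by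
        simp only [qP, norm_prod, hfactor, prod_inv_distrib]
    _ ≤ ∏ i ∈ range j, (1 + q ^ (i + 1) / (1 - q)) := by
      refine prod_le_prod (fun i _ => inv_nonneg.2 (sub_nonneg.2 (pow_le_one₀ hq0 hq1.le)))
        fun i _ => inv_one_sub_le hq1 (by positivity) ?_
      exact pow_le_of_le_one hq0 hq1.le i.succ_ne_zero
    _ ≤ Real.exp (∑ i ∈ range j, q ^ (i + 1) / (1 - q)) :=
      Real.prod_one_add_le_exp_sum _ fun i => div_nonneg (by positivity) (by linarith)
    _ ≤ Real.exp (q / (1 - q) ^ 2) := by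
      have h1q : 0 < 1 - q := by linarith
      rw [Real.exp_le_exp, ← sum_div, div_le_iff₀ h1q]
      calc ∑ i ∈ range j, q ^ (i + 1) = q * ∑ i ∈ range j, q ^ i := by
            rw [mul_sum]; exact sum_congr rfl fun i _ => pow_succ' q i
        _ ≤ q * (1 / (1 - q)) := by gcongr; exact geom_sum_le_one_div_one_sub hq0 hq1 j
        _ = q / (1 - q) ^ 2 * (1 - q) := by field_simp

lemma norm_qPRatio_le (hq0 : 0 ≤ q) (hq1 : q < 1) (c : ℂ) (k : ℕ) :
    ‖qPRatio q c k‖ ≤ Real.exp (‖c‖ / (1 - q)) * Real.exp (q / (1 - q) ^ 2) := by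
  rw [qPRatio, norm_div, div_eq_mul_inv]
  exact mul_le_mul (norm_qP_le hq0 hq1 c k) (norm_qP_self_inv_le hq0 hq1 k) (by positivity)
    (by positivity)

lemma ofReal_div_pow_cpow (hq : 0 < q) {x : ℝ} (hx : 0 < x) (l : ℕ) (w : ℂ) :
    ((x / q ^ l : ℝ) : ℂ) ^ w = (x : ℂ) ^ w * (q : ℂ) ^ (-(l : ℂ) * w) := by
  have hxq : 0 < x / q ^ l := by positivity
  simp only [Complex.cpow_def_of_ne_zero, Complex.ofReal_ne_zero, hxq.ne', hx.ne', hq.ne',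
    ne_eq, not_false_eq_true, ← Complex.exp_add, ← Complex.ofReal_log hxq.le,
    ← Complex.ofReal_log hx.le, ← Complex.ofReal_log hq.le,
    Real.log_div hx.ne' (pow_pos hq l).ne', Real.log_pow]
  push_cast
  ring_nf

def DecaysOnQGrid (q ρ : ℝ) (f : ℝ → ℂ) (y : ℝ) : Prop :=
  ∃ C : ℝ, ∀ l : ℕ, ‖f (y / q ^ l)‖ ≤ C * q ^ ((l : ℝ) * ρ)

variable {ρ : ℝ} {f : ℝ → ℂ}

lemma decaysOnQGrid_div_iff (hq : 0 < q) {y : ℝ} :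
    DecaysOnQGrid q ρ f (y / q) ↔ DecaysOnQGrid q ρ f y := by
  have hshift : ∀ l : ℕ, y / q / q ^ l = y / q ^ (l + 1) := fun l => by rw [div_div, pow_succ']
  have hpow : ∀ l : ℕ, q ^ (((l + 1 : ℕ) : ℝ) * ρ) = q ^ ((l : ℝ) * ρ) * q ^ ρ := fun l => by
    rw [Nat.cast_succ, add_one_mul, Real.rpow_add hq]
  constructor
  · rintro ⟨C, hC⟩
    refine ⟨max ‖f y‖ (C * q ^ (-ρ)), fun l => ?_⟩
    cases l with
    | zero => simp
    | succ l =>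
      calc ‖f (y / q ^ (l + 1))‖ ≤ C * q ^ ((l : ℝ) * ρ) := hshift l ▸ hC l
        _ = C * q ^ (-ρ) * q ^ (((l + 1 : ℕ) : ℝ) * ρ) := by
          rw [hpow, mul_assoc, mul_left_comm (q ^ (-ρ)), ← Real.rpow_add hq, neg_add_cancel,
            Real.rpow_zero, mul_one]
        _ ≤ _ := by gcongr; exact le_max_right _ _
  · rintro ⟨C, hC⟩
    refine ⟨C * q ^ ρ, fun l => ?_⟩
    rw [hshift, mul_assoc, mul_comm (q ^ ρ), ← hpow]
    exact hC (l + 1)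

lemma decaysOnQGrid_mul_zpow_iff (hq : 0 < q) {y : ℝ} (n : ℤ) :
    DecaysOnQGrid q ρ f (y * q ^ n) ↔ DecaysOnQGrid q ρ f y := by
  induction n using Int.induction_on with
  | zero => simp
  | succ n ih =>
    rw [← ih, ← decaysOnQGrid_div_iff hq, zpow_add_one₀ hq.ne', ← mul_assoc,
      mul_div_cancel_right₀ _ hq.ne']
  | pred n ih =>
    rw [← ih, ← decaysOnQGrid_div_iff hq (y := y * q ^ (-(n : ℤ))), zpow_sub_one₀ hq.ne',
      div_eq_mul_inv, mul_assoc]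

lemma decaysOnQGrid_of_Ioc (hq0 : 0 < q) (hq1 : q < 1)
    (hf : ∀ x ∈ Set.Ioc q 1, DecaysOnQGrid q ρ f x) {y : ℝ} (hy : 0 < y) :
    DecaysOnQGrid q ρ f y := by
  obtain ⟨n, hlo, hhi⟩ := exists_mem_Ioc_zpow hy ((one_lt_inv₀ hq0).2 hq1)
  rw [inv_zpow'] at hlo hhi
  have hx0 : y * q ^ (n + 1) ∈ Set.Ioc q 1 := by
    constructor
    · calc q = q ^ (-n) * q ^ (n + 1) := by
            rw [← zpow_add₀ hq0.ne', neg_add_cancel_left, zpow_one]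
        _ < y * q ^ (n + 1) := by gcongr
    · calc y * q ^ (n + 1) ≤ q ^ (-(n + 1)) * q ^ (n + 1) := by gcongr
        _ = 1 := by rw [← zpow_add₀ hq0.ne', neg_add_cancel, zpow_zero]
  have := (decaysOnQGrid_mul_zpow_iff hq0 (-(n + 1))).2 (hf _ hx0)
  rwa [mul_assoc, ← zpow_add₀ hq0.ne', add_neg_cancel, zpow_zero, mul_one] at this

theorem q_chu_vandermonde (hq0 : 0 < q) (hq1 : q < 1) (μ ν : ℂ) (p : ℕ) :
    ∑ lk ∈ antidiagonal p, qPRatio q ((q : ℂ) ^ ν) lk.1 * qPRatio q ((q : ℂ) ^ μ) lk.2 *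
        (q : ℂ) ^ (-((lk.1 : ℂ) + lk.2) * μ - lk.1 * ν) =
      (q : ℂ) ^ (-(p : ℂ) * (ν + μ)) * qPRatio q ((q : ℂ) ^ (ν + μ)) p := by
  have hq : (q : ℂ) ≠ 0 := Complex.ofReal_ne_zero.2 hq0.ne'
  have hexp : ∀ lk ∈ antidiagonal p, (q : ℂ) ^ (-((lk.1 : ℂ) + lk.2) * μ - lk.1 * ν) =
      (q : ℂ) ^ (-(p : ℂ) * (ν + μ)) * ((q : ℂ) ^ ν) ^ lk.2 := fun lk hlk => by
    rw [← Complex.cpow_nat_mul, ← Complex.cpow_add _ _ hq, ← mem_antidiagonal.1 hlk]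
    push_cast
    ring_nf
  rw [sum_congr rfl fun lk hlk => by rw [hexp lk hlk, mul_left_comm], ← mul_sum,
    qPRatio_vandermonde (abs_lt.2 ⟨by linarith, hq1⟩), Complex.cpow_add _ _ hq]

noncomputable def iteratedWopTerm (q : ℝ) (ν μ : ℂ) (f : ℝ → ℂ) (x : ℝ) (lk : ℕ × ℕ) : ℂ :=
  f (x / q ^ (lk.1 + lk.2)) * (q : ℂ) ^ (-((lk.1 : ℂ) + lk.2) * μ - lk.1 * ν) *
    qPRatio q ((q : ℂ) ^ ν) lk.1 * qPRatio q ((q : ℂ) ^ μ) lk.2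

lemma Wop_eq_tsum_qPRatio (ν : ℂ) (f : ℝ → ℂ) (x : ℝ) :
    Wop q ν f x = (x : ℂ) ^ ν * ∑' l : ℕ,
      f (x / q ^ l) * (q : ℂ) ^ (-(l : ℂ) * ν) * qPRatio q ((q : ℂ) ^ ν) l := by
  simp only [Wop, qPRatio, mul_div_assoc]

lemma Wop_Wop_eq_tsum_tsum (hq : 0 < q) (ν μ : ℂ) (f : ℝ → ℂ) {x : ℝ} (hx : 0 < x) :
    Wop q ν (fun t => Wop q μ f t) x =
      (x : ℂ) ^ ν * (x : ℂ) ^ μ * ∑' (l : ℕ) (k : ℕ), iteratedWopTerm q ν μ f x (l, k) := by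
  have hq' : (q : ℂ) ≠ 0 := Complex.ofReal_ne_zero.2 hq.ne'
  rw [Wop_eq_tsum_qPRatio, mul_assoc, ← tsum_mul_left (a := (x : ℂ) ^ μ)]
  congr 1
  refine tsum_congr fun l => ?_
  rw [Wop_eq_tsum_qPRatio, ofReal_div_pow_cpow hq hx, ← tsum_mul_left (a := (x : ℂ) ^ μ),
    ← tsum_mul_left, ← tsum_mul_right, ← tsum_mul_right]
  refine tsum_congr fun k => ?_
  have hexp : -((l : ℂ) + k) * μ - l * ν = -(l : ℂ) * μ + -(k : ℂ) * μ + -(l : ℂ) * ν := by ring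
  rw [iteratedWopTerm, hexp, Complex.cpow_add _ _ hq', Complex.cpow_add _ _ hq', div_div,
    ← pow_add]
  ring

lemma summable_iteratedWopTerm (hq0 : 0 < q) (hq1 : q < 1) {ν μ : ℂ} (hρμ : μ.re < ρ)
    (hρ : (μ + ν).re < ρ) {x C : ℝ} (hC : ∀ n : ℕ, ‖f (x / q ^ n)‖ ≤ C * q ^ ((n : ℝ) * ρ)) :
    Summable (iteratedWopTerm q ν μ f x) := by
  have hC0 : 0 ≤ C := by simpa using (norm_nonneg _).trans (hC 0)
  set B : ℂ → ℝ := fun c => Real.exp (‖c‖ / (1 - q)) * Real.exp (q / (1 - q) ^ 2)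
  set s := q ^ (ρ - μ.re - ν.re)
  set t := q ^ (ρ - μ.re)
  have hs : s < 1 := Real.rpow_lt_one hq0.le hq1 (by rw [Complex.add_re] at hρ; linarith)
  have ht : t < 1 := Real.rpow_lt_one hq0.le hq1 (by linarith)
  have hgeom : Summable fun lk : ℕ × ℕ => s ^ lk.1 * t ^ lk.2 :=
    (summable_geometric_of_lt_one (by positivity) hs).mul_of_nonneg
      (summable_geometric_of_lt_one (by positivity) ht) (fun _ => by positivity)
      fun _ => by positivity
  refine Summable.of_norm_bounded (hgeom.mul_left (C * B (q ^ ν) * B (q ^ μ))) fun ⟨l, k⟩ => ?_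
  have hpow : q ^ (((l + k : ℕ) : ℝ) * ρ) * q ^ (-((l : ℂ) + k) * μ - l * ν).re =
      s ^ l * t ^ k := by
    rw [← Real.rpow_natCast, ← Real.rpow_natCast, ← Real.rpow_mul hq0.le, ← Real.rpow_mul hq0.le,
      ← Real.rpow_add hq0, ← Real.rpow_add hq0]
    congr 1
    simp only [Nat.cast_add, neg_add_rev, Complex.sub_re, Complex.mul_re, Complex.add_re,
      Complex.neg_re, Complex.natCast_re, Complex.add_im, Complex.neg_im, Complex.natCast_im,
      neg_zero, add_zero, zero_mul, sub_zero]
    ring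
  calc ‖iteratedWopTerm q ν μ f x (l, k)‖
      ≤ C * q ^ (((l + k : ℕ) : ℝ) * ρ) * q ^ (-((l : ℂ) + k) * μ - l * ν).re *
          B (q ^ ν) * B (q ^ μ) := by
        simp only [iteratedWopTerm, norm_mul, Complex.norm_cpow_eq_rpow_re_of_pos hq0]
        gcongr
        · exact hC (l + k)
        · exact norm_qPRatio_le hq0.le hq1 _ l
        · exact norm_qPRatio_le hq0.le hq1 _ k
    _ = C * B (q ^ ν) * B (q ^ μ) * (s ^ l * t ^ k) := by rw [mul_assoc C, hpow]; ring

lemma sum_antidiagonal_iteratedWopTerm (hq0 : 0 < q) (hq1 : q < 1) (ν μ : ℂ) (f : ℝ → ℂ)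
    (x : ℝ) (p : ℕ) :
    ∑ lk ∈ antidiagonal p, iteratedWopTerm q ν μ f x lk =
      f (x / q ^ p) * (q : ℂ) ^ (-(p : ℂ) * (ν + μ)) * qPRatio q ((q : ℂ) ^ (ν + μ)) p := by
  rw [mul_assoc, ← q_chu_vandermonde hq0 hq1, mul_sum]
  refine sum_congr rfl fun lk hlk => ?_
  rw [iteratedWopTerm, mem_antidiagonal.1 hlk]
  ring

end

theorem Wop_semigroup_general (q : ℝ) (hq0 : 0 < q) (hq1 : q < 1)
    (ν μ : ℂ) (hν : 0 < ν.re)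
    (ρ : ℝ) (hρ : (μ + ν).re < ρ) (f : ℝ → ℂ)
    (hf : ∀ x ∈ Set.Ioc q 1, ∃ C : ℝ, ∀ l : ℕ, ‖f (x / q ^ l)‖ ≤ C * q ^ ((l : ℝ) * ρ)) :
    ∀ x : ℝ, 0 < x → Wop q ν (fun t => Wop q μ f t) x = Wop q (ν + μ) f x := by
  intro x hx
  obtain ⟨C, hC⟩ := decaysOnQGrid_of_Ioc hq0 hq1 hf hx
  have hρμ : μ.re < ρ := by rw [Complex.add_re] at hρ; linarith
  have hT := summable_iteratedWopTerm hq0 hq1 hρμ hρ hC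
  rw [Wop_Wop_eq_tsum_tsum hq0 ν μ f hx, ← hT.tsum_prod, hT.tsum_eq_tsum_sum_antidiagonal,
    Wop_eq_tsum_qPRatio, Complex.cpow_add _ _ (Complex.ofReal_ne_zero.2 hx.ne')]
  simp_rw [sum_antidiagonal_iteratedWopTerm hq0 hq1]

/-- Semigroup property of the fractional q-Weyl integrals: `W_ν ∘ W_μ = W_{ν+μ}`
on functions with sufficient decay on q-grids tending to infinity. -/
theorem Wop_semigroup (q : ℝ) (hq0 : 0 < q) (hq1 : q < 1)
    (ν μ : ℂ) (hν : 0 < ν.re) (hμ : 0 < μ.re)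
    (ρ : ℝ) (hρ : (μ + ν).re < ρ) (f : ℝ → ℂ)
    (hf : ∀ x ∈ Set.Ioc q 1, ∃ C : ℝ, ∀ l : ℕ, ‖f (x / q ^ l)‖ ≤ C * q ^ ((l : ℝ) * ρ)) :
    ∀ x : ℝ, 0 < x → Wop q ν (fun t => Wop q μ f t) x = Wop q (ν + μ) f x :=
  Wop_semigroup_general q hq0 hq1 ν μ hν ρ hρ f hf
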